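/- arXiv:2001.08775 — 6 statements merged into one kernel-verified Lean document; each statement's English description precedes it below -/
import Mathlib

section
/- Let 0 < r < 1 and let a, b be positive semidefinite n×n complex matrices. Then ‖a‖_r + ‖b‖_r ≤ ‖a + b‖_r, where ‖x‖_r = (tr(|x|^r))^{1/r} denotes the Schatten r-quasinorm. -/
open scoped ComplexOrder

/-- The Schatten `r`-quasinorm of a positive semidefinite matrix, defined via
functional calculus: `‖A‖_r = (tr (A^r))^(1/r)`. -/
noncomputable def psdSchattenNorm {n : ℕ} (r : ℝ) {A : Matrix (Fin n) (Fin n) ℂ}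
    (hA : A.PosSemidef) : ℝ :=
  ((hA.1.cfc fun t => t ^ r).trace.re) ^ (1 / r)

/-!
Conjugate by a unitary `V` diagonalizing `A + B`, and let `a`, `b` be the (nonnegative) diagonals
of `V⋆ A V` and `V⋆ B V`, so that `a + b` is the spectrum of `A + B`. The diagonal `a` is the image
of the spectrum of `A` under the doubly stochastic matrix `(|(V⋆ U)ᵢⱼ|²)`, `U` an eigenbasis of `A`
(Schur), so concavity of `t ↦ t ^ r` gives `tr (A ^ r) ≤ ∑ aᵢ ^ r`, and likewise for `B`. It remains
to use Minkowski's inequality in `ℓ^r`, which reverses for `r ≤ 1` by the same concavity.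
-/

open Finset Matrix

theorem ConcaveOn.sum_map_le_sum_map_mulVec {ι : Type*} [Fintype ι] [DecidableEq ι]
    {s : Set ℝ} {f : ℝ → ℝ} (hf : ConcaveOn ℝ s f) {D : Matrix ι ι ℝ}
    (hD : D ∈ doublyStochastic ℝ ι) {x : ι → ℝ} (hx : ∀ j, x j ∈ s) :
    ∑ j, f (x j) ≤ ∑ i, f ((D *ᵥ x) i) :=
  calc ∑ j, f (x j) = ∑ j, (∑ i, D i j) * f (x j) := by
        simp only [sum_col_of_mem_doublyStochastic hD, one_mul]
    _ = ∑ i, ∑ j, D i j • f (x j) := by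
        simp only [sum_mul, smul_eq_mul]
        exact sum_comm
    _ ≤ ∑ i, f (∑ j, D i j • x j) := sum_le_sum fun i _ =>
        hf.le_map_sum (fun j _ => nonneg_of_mem_doublyStochastic hD)
          (sum_row_of_mem_doublyStochastic hD i) (fun j _ => hx j)
    _ = ∑ i, f ((D *ᵥ x) i) := by simp only [mulVec, dotProduct, smul_eq_mul]

theorem Matrix.normSq_mem_doublyStochastic {ι : Type*} [Fintype ι] [DecidableEq ι]
    {U : Matrix ι ι ℂ} (hU : U ∈ unitaryGroup ι ℂ) :
    (of fun i j => Complex.normSq (U i j)) ∈ doublyStochastic ℝ ι := by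
  refine mem_doublyStochastic_iff_sum.2
    ⟨fun i j => Complex.normSq_nonneg _, fun i => ?_, fun j => ?_⟩
  · have h := congrFun (congrFun (mem_unitaryGroup_iff.1 hU) i) i
    simp only [mul_apply, star_apply, RCLike.star_def, Complex.mul_conj, one_apply_eq] at h
    exact_mod_cast h
  · have h := congrFun (congrFun (mem_unitaryGroup_iff'.1 hU) j) j
    simp only [mul_apply, star_apply, RCLike.star_def, mul_comm ((starRingEnd ℂ) _),
      Complex.mul_conj, one_apply_eq] at h
    exact_mod_cast h

theorem Matrix.IsHermitian.re_diag_conj_eq_mulVec_eigenvalues {ι : Type*} [Fintype ι]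
    [DecidableEq ι] {M : Matrix ι ι ℂ} (hM : M.IsHermitian) (U : Matrix ι ι ℂ) :
    (fun i => ((star U * M * U) i i).re) =
      (of fun i j => Complex.normSq ((star U * hM.eigenvectorUnitary) i j)) *ᵥ hM.eigenvalues := by
  ext i
  set W := star U * (hM.eigenvectorUnitary : Matrix ι ι ℂ)
  have hconj : star U * M * U = W * diagonal (RCLike.ofReal ∘ hM.eigenvalues) * star W := by
    conv_lhs => rw [hM.spectral_theorem, Unitary.conjStarAlgAut_apply]
    simp only [W, star_mul, star_star, Matrix.mul_assoc]
  rw [hconj, mul_apply, Complex.re_sum]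
  refine sum_congr rfl fun j _ => ?_
  simp only [mul_diagonal, star_apply, RCLike.star_def, Function.comp_apply, of_apply,
    mul_right_comm (W i j), Complex.mul_conj]
  simp [mul_comm]

theorem Matrix.IsHermitian.sum_map_eigenvalues_le_sum_map_re_diag_conj {ι : Type*} [Fintype ι]
    [DecidableEq ι] {M : Matrix ι ι ℂ} (hM : M.IsHermitian) {U : Matrix ι ι ℂ}
    (hU : U ∈ unitaryGroup ι ℂ) {s : Set ℝ} {f : ℝ → ℝ} (hf : ConcaveOn ℝ s f)
    (hs : ∀ j, hM.eigenvalues j ∈ s) :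
    ∑ j, f (hM.eigenvalues j) ≤ ∑ i, f ((star U * M * U) i i).re := by
  have hD := normSq_mem_doublyStochastic <|
    mul_mem (Unitary.star_mem hU) (hM.eigenvectorUnitary).2
  simpa only [← hM.re_diag_conj_eq_mulVec_eigenvalues U] using hf.sum_map_le_sum_map_mulVec hD hs

theorem Real.rpow_add_le_sum_rpow_add {ι : Type*} {s : Finset ι} {p : ℝ} (hp0 : 0 < p)
    (hp1 : p ≤ 1) {f g : ι → ℝ} (hf : ∀ i ∈ s, 0 ≤ f i) (hg : ∀ i ∈ s, 0 ≤ g i) {X Y : ℝ}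
    (hX : 0 < X) (hY : 0 < Y) (hfX : ∑ i ∈ s, (f i / X) ^ p = 1)
    (hgY : ∑ i ∈ s, (g i / Y) ^ p = 1) :
    (X + Y) ^ p ≤ ∑ i ∈ s, (f i + g i) ^ p := by
  have hS : 0 < X + Y := add_pos hX hY
  have hjensen : ∀ i ∈ s,
      X / (X + Y) * (f i / X) ^ p + Y / (X + Y) * (g i / Y) ^ p ≤ ((f i + g i) / (X + Y)) ^ p := by
    intro i hi
    have h := (concaveOn_rpow hp0.le hp1).2 (div_nonneg (hf i hi) hX.le)
      (div_nonneg (hg i hi) hY.le) (by positivity : 0 ≤ X / (X + Y))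
      (by positivity : 0 ≤ Y / (X + Y)) (by field_simp)
    have : X / (X + Y) * (f i / X) + Y / (X + Y) * (g i / Y) = (f i + g i) / (X + Y) := by
      field_simp
    simpa only [smul_eq_mul, this] using h
  have h1 : 1 ≤ ∑ i ∈ s, ((f i + g i) / (X + Y)) ^ p := calc
    1 = X / (X + Y) * ∑ i ∈ s, (f i / X) ^ p + Y / (X + Y) * ∑ i ∈ s, (g i / Y) ^ p := by
        rw [hfX, hgY]; field_simp
    _ = ∑ i ∈ s, (X / (X + Y) * (f i / X) ^ p + Y / (X + Y) * (g i / Y) ^ p) := by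
        rw [sum_add_distrib, mul_sum, mul_sum]
    _ ≤ _ := sum_le_sum hjensen
  rwa [sum_congr rfl fun i hi => div_rpow (add_nonneg (hf i hi) (hg i hi)) hS.le p, ← sum_div,
    one_le_div (rpow_pos_of_pos hS p)] at h1

theorem Real.Lp_add_Lp_le_Lp_add_of_nonneg {ι : Type*} (s : Finset ι) {p : ℝ} (hp0 : 0 < p)
    (hp1 : p ≤ 1) {f g : ι → ℝ} (hf : ∀ i ∈ s, 0 ≤ f i) (hg : ∀ i ∈ s, 0 ≤ g i) :
    (∑ i ∈ s, f i ^ p) ^ (1 / p) + (∑ i ∈ s, g i ^ p) ^ (1 / p) ≤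
      (∑ i ∈ s, (f i + g i) ^ p) ^ (1 / p) := by
  have hsum {h : ι → ℝ} (hh : ∀ i ∈ s, 0 ≤ h i) : 0 ≤ ∑ i ∈ s, h i ^ p :=
    sum_nonneg fun i hi => rpow_nonneg (hh i hi) p
  rcases (rpow_nonneg (hsum hf) (1 / p)).eq_or_lt with hX | hX
  · rw [← hX, zero_add]
    exact rpow_le_rpow (hsum hg) (sum_le_sum fun i hi =>
      rpow_le_rpow (hg i hi) (le_add_of_nonneg_left (hf i hi)) hp0.le) (by positivity)
  rcases (rpow_nonneg (hsum hg) (1 / p)).eq_or_lt with hY | hY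
  · rw [← hY, add_zero]
    exact rpow_le_rpow (hsum hf) (sum_le_sum fun i hi =>
      rpow_le_rpow (hf i hi) (le_add_of_nonneg_right (hg i hi)) hp0.le) (by positivity)
  have hnormalize {h : ι → ℝ} (hh : ∀ i ∈ s, 0 ≤ h i)
      (hpos : 0 < (∑ i ∈ s, h i ^ p) ^ (1 / p)) :
      ∑ i ∈ s, (h i / (∑ i ∈ s, h i ^ p) ^ (1 / p)) ^ p = 1 := by
    rw [sum_congr rfl fun i hi => div_rpow (hh i hi) hpos.le p, ← sum_div, ← rpow_mul (hsum hh),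
      one_div_mul_cancel hp0.ne', rpow_one, div_self]
    rintro h0
    rw [h0, zero_rpow (by positivity)] at hpos
    exact hpos.false
  have hS := add_pos hX hY
  calc _ = (((∑ i ∈ s, f i ^ p) ^ (1 / p) + (∑ i ∈ s, g i ^ p) ^ (1 / p)) ^ p) ^ (1 / p) := by
        rw [← rpow_mul hS.le, mul_one_div_cancel hp0.ne', rpow_one]
    _ ≤ _ := by
        gcongr
        exact rpow_add_le_sum_rpow_add hp0 hp1 hf hg hX hY (hnormalize hf hX) (hnormalize hg hY)

theorem Matrix.IsHermitian.trace_cfc {𝕜 ι : Type*} [RCLike 𝕜] [Fintype ι] [DecidableEq ι]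
    {M : Matrix ι ι 𝕜} (hM : M.IsHermitian) (f : ℝ → ℝ) :
    (hM.cfc f).trace = ∑ i, (f (hM.eigenvalues i) : 𝕜) := by
  rw [IsHermitian.cfc, Unitary.conjStarAlgAut_apply, trace_mul_cycle, Unitary.coe_star_mul_self,
    one_mul, trace_diagonal]
  rfl

theorem Matrix.IsHermitian.re_diag_conj_eigenvectorUnitary {ι : Type*} [Fintype ι]
    [DecidableEq ι] {M : Matrix ι ι ℂ} (hM : M.IsHermitian) (i : ι) :
    ((star (hM.eigenvectorUnitary : Matrix ι ι ℂ) * M * hM.eigenvectorUnitary) i i).re =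
      hM.eigenvalues i := by
  have h := hM.conjStarAlgAut_star_eigenvectorUnitary
  rw [Unitary.conjStarAlgAut_apply, Unitary.coe_star, star_star] at h
  simp [h]

/-- Reverse triangle inequality for the Schatten `r`-quasinorm, `0 < r < 1`,
on positive semidefinite matrices: `‖a‖_r + ‖b‖_r ≤ ‖a + b‖_r`. -/
theorem psd_schatten_reverse_triangle {n : ℕ} {r : ℝ} (hr0 : 0 < r) (hr1 : r < 1)
    {A B : Matrix (Fin n) (Fin n) ℂ} (hA : A.PosSemidef) (hB : B.PosSemidef) :
    psdSchattenNorm r hA + psdSchattenNorm r hB ≤ psdSchattenNorm r (hA.add hB) := by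
  let V : Matrix (Fin n) (Fin n) ℂ := (hA.add hB).1.eigenvectorUnitary
  have hV : V ∈ unitaryGroup (Fin n) ℂ := (hA.add hB).1.eigenvectorUnitary.2
  let diagV (M : Matrix (Fin n) (Fin n) ℂ) (i : Fin n) : ℝ := ((star V * M * V) i i).re
  have hdiag_nonneg {M : Matrix (Fin n) (Fin n) ℂ} (hM : M.PosSemidef) i : 0 ≤ diagV M i :=
    (Complex.nonneg_iff.1 (hM.conjTranspose_mul_mul_same V).diag_nonneg).1
  have hdiag_add i : diagV A i + diagV B i = (hA.add hB).1.eigenvalues i := by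
    rw [← (hA.add hB).1.re_diag_conj_eigenvectorUnitary, ← Complex.add_re, ← Matrix.add_apply,
      Matrix.mul_add, Matrix.add_mul]
  have hschur {M : Matrix (Fin n) (Fin n) ℂ} (hM : M.PosSemidef) :
      (∑ j, hM.1.eigenvalues j ^ r) ^ (1 / r) ≤ (∑ i, diagV M i ^ r) ^ (1 / r) :=
    Real.rpow_le_rpow (sum_nonneg fun j _ => Real.rpow_nonneg (hM.eigenvalues_nonneg j) r)
      (hM.1.sum_map_eigenvalues_le_sum_map_re_diag_conj hV
        (Real.concaveOn_rpow hr0.le hr1.le) hM.eigenvalues_nonneg) (by positivity)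
  simp only [psdSchattenNorm, IsHermitian.trace_cfc, Complex.re_sum, Complex.coe_algebraMap,
    Complex.ofReal_re]
  calc _ ≤ (∑ i, diagV A i ^ r) ^ (1 / r) + (∑ i, diagV B i ^ r) ^ (1 / r) :=
        add_le_add (hschur hA) (hschur hB)
    _ ≤ (∑ i, (diagV A i + diagV B i) ^ r) ^ (1 / r) :=
        Real.Lp_add_Lp_le_Lp_add_of_nonneg univ hr0 hr1.le (fun i _ => hdiag_nonneg hA i)
          (fun i _ => hdiag_nonneg hB i)
    _ = _ := by simp only [hdiag_add]
end

section
/- Let 0 < p ≤ 2 and let (a_k)_{k=1}^N be a finite sequence of n×n complex matrices. Then (∑_{k=1}^N ‖a_k‖_p²)^{1/2} ≤ ‖(∑_{k=1}^N a_k* a_k)^{1/2}‖_p, where ‖·‖_p is the Schatten p-(quasi)norm. -/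
open scoped ComplexOrder

open scoped Matrix

namespace Matrix.PosSemidef
variable {n 𝕜 : Type*} [Fintype n] [DecidableEq n] [RCLike 𝕜] {A : Matrix n n 𝕜}
noncomputable def sqrt (hA : A.PosSemidef) : Matrix n n 𝕜 :=
  hA.1.eigenvectorUnitary.1 * diagonal ((↑) ∘ (√·) ∘ hA.1.eigenvalues) *
  (star hA.1.eigenvectorUnitary : Matrix n n 𝕜)
lemma posSemidef_sqrt (hA : A.PosSemidef) : PosSemidef hA.sqrt := by
  apply PosSemidef.mul_mul_conjTranspose_same
  refine posSemidef_diagonal_iff.mpr fun i ↦ ?_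
  rw [Function.comp_apply, RCLike.nonneg_iff]
  constructor
  · simp only [RCLike.ofReal_re]
    exact Real.sqrt_nonneg _
  · simp only [RCLike.ofReal_im]
lemma sqrt_mul_self' {n : Type*} [Fintype n] [DecidableEq n] {A : Matrix n n ℂ}
    (hA : A.PosSemidef) : hA.sqrt * hA.sqrt = A := by
  conv_rhs => rw [hA.1.spectral_theorem, Unitary.conjStarAlgAut_apply]
  unfold Matrix.PosSemidef.sqrt
  simp only [mul_assoc]
  rw [← mul_assoc (star (hA.1.eigenvectorUnitary : Matrix n n ℂ)), Unitary.coe_star_mul_self,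
    one_mul, ← mul_assoc (Matrix.diagonal _), Matrix.diagonal_mul_diagonal]
  congr 3
  funext i
  simp [← Complex.ofReal_mul, Real.mul_self_sqrt (hA.eigenvalues_nonneg i)]

end Matrix.PosSemidef

lemma continuousOn_of_finite {f : ℝ → ℝ} {s : Set ℝ} (hs : s.Finite) : ContinuousOn f s := by
  rw [continuousOn_iff_continuous_restrict]
  have : Finite s := hs.to_subtype
  exact continuous_of_discreteTopology

lemma trace_hcfc {n : ℕ} {A : Matrix (Fin n) (Fin n) ℂ} (hA : A.IsHermitian) (f : ℝ → ℝ) :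
    (hA.cfc f).trace = ∑ i, (f (hA.eigenvalues i) : ℂ) := by
  rw [Matrix.IsHermitian.cfc, Unitary.conjStarAlgAut_apply, Matrix.trace_mul_cycle,
    Unitary.coe_star_mul_self, Matrix.one_mul, Matrix.trace_diagonal]
  rfl

lemma sqrt_cfc_comp {n : ℕ} {S : Matrix (Fin n) (Fin n) ℂ} (hS : S.PosSemidef) (f : ℝ → ℝ) :
    hS.posSemidef_sqrt.1.cfc f = hS.1.cfc (fun t => f (Real.sqrt t)) := by
  have h1 : hS.sqrt = cfc Real.sqrt S := by
    rw [Matrix.IsHermitian.cfc_eq hS.1]; rfl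
  have hsa : IsSelfAdjoint S := hS.1
  rw [← Matrix.IsHermitian.cfc_eq, ← Matrix.IsHermitian.cfc_eq]
  have h2 := cfc_comp f Real.sqrt S hsa
    (continuousOn_of_finite ((Matrix.finite_real_spectrum (A:=S)).image _))
    (continuousOn_of_finite (Matrix.finite_real_spectrum (A:=S)))
  rw [← h1] at h2
  exact h2.symm
/-- The Schatten `p`-(quasi)norm of a matrix `x`:
`‖x‖_p = (tr (|x|^p))^(1/p)` where `|x| = (xᴴx)^(1/2)`. -/
noncomputable def schattenNorm {n : ℕ} (p : ℝ) (x : Matrix (Fin n) (Fin n) ℂ) : ℝ :=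
  (((Matrix.posSemidef_conjTranspose_mul_self x).posSemidef_sqrt.1.cfc
      fun t => t ^ p).trace.re) ^ (1 / p)

/-- A finite sum of positive semidefinite matrices `aₖᴴ aₖ` is positive semidefinite. -/
lemma sum_conjTranspose_mul_self_posSemidef {n N : ℕ} (a : Fin N → Matrix (Fin n) (Fin n) ℂ) :
    (∑ k, (a k)ᴴ * a k).PosSemidef :=
  Finset.sum_induction _ _ (fun _ _ h1 h2 => h1.add h2) Matrix.PosSemidef.zero
    (fun k _ => Matrix.posSemidef_conjTranspose_mul_self (a k))

lemma eig_congr {n : ℕ} {A B : Matrix (Fin n) (Fin n) ℂ} (hA : A.IsHermitian)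
    (hB : B.IsHermitian) (h : A = B) : hA.eigenvalues = hB.eigenvalues := by
  subst h; rfl

lemma schattenNorm_eq {n : ℕ} (p : ℝ) (x : Matrix (Fin n) (Fin n) ℂ) :
    schattenNorm p x =
      (∑ i, Real.sqrt ((Matrix.posSemidef_conjTranspose_mul_self x).1.eigenvalues i) ^ p)
        ^ (1 / p) := by
  unfold schattenNorm
  rw [sqrt_cfc_comp, trace_hcfc, ← Complex.ofReal_sum, Complex.ofReal_re]

lemma psd_diag_re_nonneg {n : ℕ} {M : Matrix (Fin n) (Fin n) ℂ} (hM : M.PosSemidef) (i : Fin n) :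
    0 ≤ (M i i).re := by
  have := hM.re_dotProduct_nonneg (Pi.single i 1)
  simpa [dotProduct, Matrix.mulVec, Pi.single_apply, Finset.sum_ite_eq,
    dotProduct_single] using this

lemma jensen_rpow {m : ℕ} {q : ℝ} (hq0 : 0 < q) (hq1 : q ≤ 1) (w μ : Fin m → ℝ)
    (hw : ∀ j, 0 ≤ w j) (hw1 : ∑ j, w j = 1) (hμ : ∀ j, 0 ≤ μ j) :
    ∑ j, w j * μ j ^ q ≤ (∑ j, w j * μ j) ^ q := by
  have := (Real.concaveOn_rpow hq0.le hq1).le_map_sum (t := Finset.univ) (w := w) (p := μ)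
    (fun j _ => hw j) hw1 (fun j _ => hμ j)
  simpa [smul_eq_mul] using this

lemma peierls {n : ℕ} {q : ℝ} (hq0 : 0 < q) (hq1 : q ≤ 1)
    {B : Matrix (Fin n) (Fin n) ℂ} (hB : B.PosSemidef)
    {V : Matrix (Fin n) (Fin n) ℂ} (hV : V ∈ Matrix.unitaryGroup (Fin n) ℂ) :
    ∑ j, hB.1.eigenvalues j ^ q ≤ ∑ i, ((star V * B * V) i i).re ^ q := by
  set U : Matrix (Fin n) (Fin n) ℂ := (hB.1.eigenvectorUnitary : Matrix (Fin n) (Fin n) ℂ) with hU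
  set W : Matrix (Fin n) (Fin n) ℂ := star V * U with hWdef
  have hWmem : W ∈ Matrix.unitaryGroup (Fin n) ℂ :=
    mul_mem (Unitary.star_mem hV) (SetLike.coe_mem hB.1.eigenvectorUnitary)
  have hWrow : ∀ i, ∑ j, Complex.normSq (W i j) = 1 := by
    intro i
    have h1 : (W * star W) i i = (1 : Matrix (Fin n) (Fin n) ℂ) i i := by
      rw [(Matrix.mem_unitaryGroup_iff).mp hWmem]
    rw [Matrix.mul_apply] at h1
    simp only [Matrix.star_apply, Matrix.one_apply_eq] at h1
    have := congrArg Complex.re h1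
    rw [Complex.re_sum] at this
    simpa [Complex.mul_conj] using this
  have hWcol : ∀ j, ∑ i, Complex.normSq (W i j) = 1 := by
    intro j
    have h1 : (star W * W) j j = (1 : Matrix (Fin n) (Fin n) ℂ) j j := by
      rw [(Matrix.mem_unitaryGroup_iff').mp hWmem]
    rw [Matrix.mul_apply] at h1
    simp only [Matrix.star_apply, Matrix.one_apply_eq] at h1
    have := congrArg Complex.re h1
    rw [Complex.re_sum] at this
    simpa [mul_comm, Complex.mul_conj] using this
  have hfact : star V * B * V = W * Matrix.diagonal (RCLike.ofReal ∘ hB.1.eigenvalues) * star W := by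
    conv_lhs => rw [hB.1.spectral_theorem]
    rw [hWdef, star_mul, star_star]
    simp only [Unitary.conjStarAlgAut_apply, Matrix.mul_assoc, hU]
  have hentry : ∀ i, ((star V * B * V) i i).re
      = ∑ j, Complex.normSq (W i j) * hB.1.eigenvalues j := by
    intro i
    rw [hfact, Matrix.mul_apply]
    simp only [Matrix.mul_diagonal, Matrix.star_apply]
    rw [Complex.re_sum]
    congr 1; ext j
    have : W i j * (RCLike.ofReal ∘ hB.1.eigenvalues) j * star (W i j)
        = ((Complex.normSq (W i j) * hB.1.eigenvalues j : ℝ) : ℂ) := by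
      simp only [Function.comp_apply, RCLike.star_def]
      push_cast
      rw [mul_comm (W i j), mul_assoc, Complex.mul_conj]
      exact mul_comm _ _
    rw [this, Complex.ofReal_re]
  calc ∑ j, hB.1.eigenvalues j ^ q
      = ∑ j, (∑ i, Complex.normSq (W i j)) * hB.1.eigenvalues j ^ q := by
        simp [hWcol]
    _ = ∑ i, ∑ j, Complex.normSq (W i j) * hB.1.eigenvalues j ^ q := by
        rw [Finset.sum_comm]
        simp [Finset.sum_mul]
    _ ≤ ∑ i, (∑ j, Complex.normSq (W i j) * hB.1.eigenvalues j) ^ q := by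
        refine Finset.sum_le_sum fun i _ => ?_
        exact jensen_rpow hq0 hq1 _ _ (fun j => Complex.normSq_nonneg _) (hWrow i)
          (fun j => hB.eigenvalues_nonneg j)
    _ = ∑ i, ((star V * B * V) i i).re ^ q := by
        simp [hentry]

lemma rev_minkowski {n N : ℕ} {q : ℝ} (hq0 : 0 < q) (hq1 : q ≤ 1)
    (d : Fin n → Fin N → ℝ) (hd : ∀ i k, 0 ≤ d i k) :
    ∑ k, (∑ i, d i k ^ q) ^ (1 / q) ≤ (∑ i, (∑ k, d i k) ^ q) ^ (1 / q) := by
  have hqne : q ≠ 0 := hq0.ne'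
  set A : Fin N → ℝ := fun k => (∑ i, d i k ^ q) ^ (1 / q) with hAdef
  have hAnn : ∀ k, 0 ≤ A k := fun k =>
    Real.rpow_nonneg (Finset.sum_nonneg fun i _ => Real.rpow_nonneg (hd i k) q) _
  have hApow : ∀ k, A k ^ q = ∑ i, d i k ^ q := by
    intro k
    show ((∑ i, d i k ^ q) ^ (1 / q)) ^ q = ∑ i, d i k ^ q
    rw [← Real.rpow_mul (Finset.sum_nonneg fun i _ => Real.rpow_nonneg (hd i k) q),
      one_div_mul_cancel hqne, Real.rpow_one]
  have hRHSnn : 0 ≤ ∑ i, (∑ k, d i k) ^ q :=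
    Finset.sum_nonneg fun i _ => Real.rpow_nonneg (Finset.sum_nonneg fun k _ => hd i k) q
  set M : ℝ := ∑ k, A k with hMdef
  have hMnn : 0 ≤ M := Finset.sum_nonneg fun k _ => hAnn k
  rcases eq_or_lt_of_le hMnn with h0 | hMpos
  · rw [← h0]
    exact Real.rpow_nonneg hRHSnn _
  have hzero : ∀ k, A k = 0 → ∀ i, d i k = 0 := by
    intro k hk i
    have hs : ∑ i, d i k ^ q = 0 := by rw [← hApow k, hk, Real.zero_rpow hqne]
    have := (Finset.sum_eq_zero_iff_of_nonneg
      (fun i _ => Real.rpow_nonneg (hd i k) q)).mp hs i (Finset.mem_univ i)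
    exact (Real.rpow_eq_zero (hd i k) hqne).mp this
  set s : Finset (Fin N) := Finset.univ.filter (fun k => A k ≠ 0) with hsdef
  have hsums : ∑ k ∈ s, A k = M := Finset.sum_filter_ne_zero _
  have hApos : ∀ k ∈ s, 0 < A k := by
    intro k hk
    rcases (hAnn k).lt_or_eq with h | h
    · exact h
    · exact absurd h.symm (Finset.mem_filter.mp hk).2
  have core : M ^ q ≤ ∑ i, (∑ k, d i k) ^ q := by
    have key : ∀ i, ∑ k ∈ s, (A k / M) * (d i k * M / A k) ^ q ≤ (∑ k, d i k) ^ q := by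
      intro i
      have hmem : ∀ k ∈ s, d i k * M / A k ∈ Set.Ici (0:ℝ) := fun k hk =>
        Set.mem_Ici.mpr (by have h := hApos k hk; have h2 := hd i k; positivity)
      have hw0 : ∀ k ∈ s, 0 ≤ A k / M := fun k hk => by
        have := hAnn k; positivity
      have hw1 : ∑ k ∈ s, A k / M = 1 := by
        rw [← Finset.sum_div, hsums, div_self hMpos.ne']
      have hj := (Real.concaveOn_rpow hq0.le hq1).le_map_sum hw0 hw1 hmem
      simp only [smul_eq_mul] at hj
      have h2 : ∑ k ∈ s, (A k / M) * (d i k * M / A k) = ∑ k, d i k := by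
        rw [Finset.sum_congr rfl (fun k hk => show (A k / M) * (d i k * M / A k) = d i k by
          have hAk := (hApos k hk).ne'
          field_simp)]
        exact Finset.sum_subset (Finset.subset_univ s)
          (fun k _ hk => hzero k (by simpa [hsdef] using hk) i)
      rw [h2] at hj
      exact hj
    have swap : ∑ i, ∑ k ∈ s, (A k / M) * (d i k * M / A k) ^ q = M ^ q := by
      rw [Finset.sum_comm]
      have hterm : ∀ k ∈ s, ∑ i, (A k / M) * (d i k * M / A k) ^ q = A k * (M ^ q / M) := by
        intro k hk
        have hAk := hApos k hk
        have hstep : ∀ i, (A k / M) * (d i k * M / A k) ^ q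
            = (A k / M) * (M ^ q / A k ^ q) * d i k ^ q := by
          intro i
          rw [mul_div_assoc, Real.mul_rpow (hd i k) (div_nonneg hMnn hAk.le),
            Real.div_rpow hMnn hAk.le]
          ring
        rw [Finset.sum_congr rfl (fun i _ => hstep i), ← Finset.mul_sum, ← hApow k]
        have hAq : A k ^ q ≠ 0 := (Real.rpow_pos_of_pos hAk q).ne'
        rw [mul_assoc, div_mul_cancel₀ _ hAq, div_mul_eq_mul_div, mul_div_assoc]
      rw [Finset.sum_congr rfl hterm, ← Finset.sum_mul, hsums, mul_comm,
        div_mul_cancel₀ _ hMpos.ne']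
    calc M ^ q = ∑ i, ∑ k ∈ s, (A k / M) * (d i k * M / A k) ^ q := swap.symm
      _ ≤ ∑ i, (∑ k, d i k) ^ q := Finset.sum_le_sum fun i _ => key i
  calc M = (M ^ q) ^ (1 / q) := by
        rw [← Real.rpow_mul hMnn, mul_one_div, div_self hqne, Real.rpow_one]
    _ ≤ (∑ i, (∑ k, d i k) ^ q) ^ (1 / q) :=
        Real.rpow_le_rpow (Real.rpow_nonneg hMnn q) core (by positivity)

/-- Noncommutative ℓ₂-column estimate: for `0 < p ≤ 2`,
`(∑ₖ ‖aₖ‖_p²)^(1/2) ≤ ‖(∑ₖ aₖᴴ aₖ)^(1/2)‖_p`. -/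
theorem sum_sq_schatten_le_schatten_column {n N : ℕ} {p : ℝ} (hp0 : 0 < p) (hp2 : p ≤ 2)
    (a : Fin N → Matrix (Fin n) (Fin n) ℂ) :
    (∑ k, (schattenNorm p (a k)) ^ 2) ^ ((1 : ℝ) / 2) ≤
      schattenNorm p (sum_conjTranspose_mul_self_posSemidef a).sqrt := by
  have hpne : p ≠ 0 := hp0.ne'
  set q : ℝ := p / 2 with hqdef
  have hq0 : 0 < q := by positivity
  have hq1 : q ≤ 1 := by rw [hqdef]; linarith
  set hS := sum_conjTranspose_mul_self_posSemidef a with hSdef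
  set X := hS.sqrt with hXdef
  have hXX : Xᴴ * X = ∑ k, (a k)ᴴ * a k := by
    rw [hXdef, hS.posSemidef_sqrt.1.eq, Matrix.PosSemidef.sqrt_mul_self' hS]
  set lam : Fin n → ℝ := hS.1.eigenvalues with hlamdef
  have hlamnn : ∀ i, 0 ≤ lam i := fun i => hS.eigenvalues_nonneg i
  -- eigenvalues of a k
  set lamk : Fin N → Fin n → ℝ :=
    fun k => (Matrix.posSemidef_conjTranspose_mul_self (a k)).1.eigenvalues with hlamkdef
  have hlamknn : ∀ k i, 0 ≤ lamk k i :=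
    fun k i => (Matrix.posSemidef_conjTranspose_mul_self (a k)).eigenvalues_nonneg i
  -- rewrite RHS
  have hRHS : schattenNorm p X = (∑ i, lam i ^ q) ^ (1 / p) := by
    rw [schattenNorm_eq]
    congr 1
    refine Finset.sum_congr rfl fun i _ => ?_
    rw [eig_congr (Matrix.posSemidef_conjTranspose_mul_self X).1 hS.1 hXX]
    rw [← Real.rpow_div_two_eq_sqrt p (hlamnn i)]
  -- rewrite LHS terms
  have hLHS : ∀ k, schattenNorm p (a k) = (∑ i, lamk k i ^ q) ^ (1 / p) := by
    intro k
    rw [schattenNorm_eq]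
    congr 1
    exact Finset.sum_congr rfl fun i _ =>
      (Real.rpow_div_two_eq_sqrt p (hlamknn k i)).symm
  set T : ℝ := ∑ i, lam i ^ q with hTdef
  set Tk : Fin N → ℝ := fun k => ∑ i, lamk k i ^ q with hTkdef
  have hTnn : 0 ≤ T := Finset.sum_nonneg fun i _ => Real.rpow_nonneg (hlamnn i) q
  have hTknn : ∀ k, 0 ≤ Tk k :=
    fun k => Finset.sum_nonneg fun i _ => Real.rpow_nonneg (hlamknn k i) q
  -- the key inequality
  have key : ∑ k, Tk k ^ (1 / q) ≤ T ^ (1 / q) := by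
    set V : Matrix (Fin n) (Fin n) ℂ := (hS.1.eigenvectorUnitary : Matrix (Fin n) (Fin n) ℂ)
      with hVdef
    have hV : V ∈ Matrix.unitaryGroup (Fin n) ℂ := SetLike.coe_mem _
    set d : Fin n → Fin N → ℝ :=
      fun i k => ((star V * ((a k)ᴴ * a k) * V) i i).re with hddef
    have hd : ∀ i k, 0 ≤ d i k := by
      intro i k
      refine psd_diag_re_nonneg ?_ i
      have := (Matrix.posSemidef_conjTranspose_mul_self (a k)).conjTranspose_mul_mul_same V
      rwa [← Matrix.star_eq_conjTranspose V] at this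
    have hlam_eq : ∀ i, lam i = ∑ k, d i k := by
      intro i
      have h1 : star V * (∑ k, (a k)ᴴ * a k) * V
          = Matrix.diagonal (RCLike.ofReal ∘ hS.1.eigenvalues) :=
        by have := hS.1.conjStarAlgAut_star_eigenvectorUnitary
           rwa [Unitary.conjStarAlgAut_star_apply] at this
      have h2 : star V * (∑ k, (a k)ᴴ * a k) * V = ∑ k, star V * ((a k)ᴴ * a k) * V := by
        rw [Finset.mul_sum, Finset.sum_mul]
      rw [h2] at h1
      have h3 := congrArg (fun (M : Matrix (Fin n) (Fin n) ℂ) => (M i i).re) h1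
      simp only [Matrix.sum_apply, Complex.re_sum, Matrix.diagonal_apply_eq,
        Function.comp_apply] at h3
      have h4 : (((RCLike.ofReal (hS.1.eigenvalues i)) : ℂ)).re = hS.1.eigenvalues i := rfl
      rw [hlamdef, ← h4, ← h3]
    have hpk : ∀ k, Tk k ≤ ∑ i, d i k ^ q := by
      intro k
      exact peierls hq0 hq1 (Matrix.posSemidef_conjTranspose_mul_self (a k)) hV
    calc ∑ k, Tk k ^ (1 / q)
        ≤ ∑ k, (∑ i, d i k ^ q) ^ (1 / q) := by
          refine Finset.sum_le_sum fun k _ => ?_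
          exact Real.rpow_le_rpow (hTknn k) (hpk k) (by positivity)
      _ ≤ (∑ i, (∑ k, d i k) ^ q) ^ (1 / q) := rev_minkowski hq0 hq1 d hd
      _ = T ^ (1 / q) := by
          rw [hTdef]
          congr 1
          exact Finset.sum_congr rfl fun i _ => by rw [hlam_eq i]
  -- assemble
  rw [hRHS]
  have hsq : ∀ k, schattenNorm p (a k) ^ 2 = Tk k ^ (1 / q) := by
    intro k
    rw [hLHS k, ← Real.rpow_natCast ((Tk k) ^ (1 / p)) 2,
      ← Real.rpow_mul (hTknn k)]
    congr 1
    rw [hqdef]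
    field_simp
    norm_num
  rw [Finset.sum_congr rfl fun k _ => hsq k]
  have hfin : (T ^ (1 / q)) ^ ((1 : ℝ) / 2) = T ^ (1 / p) := by
    rw [← Real.rpow_mul hTnn]
    congr 1
    rw [hqdef]
    field_simp
  calc (∑ k, Tk k ^ (1 / q)) ^ ((1 : ℝ) / 2)
      ≤ (T ^ (1 / q)) ^ ((1 : ℝ) / 2) := by
        refine Real.rpow_le_rpow ?_ key (by positivity)
        exact Finset.sum_nonneg fun k _ => Real.rpow_nonneg (hTknn k) _
    _ = T ^ (1 / p) := hfin
end

section
/- Let 0 < p < 2 and let a, b be positive semidefinite n×n complex matrices with a invertible and b² ≤ a² (in the Loewner order). Then tr(a^{p-2}(a² − b²)) ≤ (2/p)·tr(a^p − b^p). -/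
/-!
Diagonalize `A = ∑ λᵢ uᵢuᵢ*` and `B = ∑ μⱼ vⱼvⱼ*`. Every term of the inequality is a trace
`tr (f(A) g(B)) = ∑ᵢⱼ f(λᵢ) g(μⱼ) |⟨uᵢ, vⱼ⟩|²`, and the weights `|⟨uᵢ, vⱼ⟩|²` are nonnegative with
unit row and column sums, so it suffices to prove the scalar inequality
`s^(p-2) (s² - t²) ≤ (2/p) (s^p - t^p)` for `s > 0`, `t ≥ 0`. With `x = (t/s)²` and `q = p/2 ≤ 1`
this is Bernoulli's inequality `x^q ≤ 1 + q (x - 1)`.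
-/

open Matrix

open scoped ComplexOrder

theorem Real.rpow_sub_two_mul_sq_sub_sq_le {p s t : ℝ} (hp0 : 0 < p) (hp2 : p ≤ 2) (hs : 0 < s)
    (ht : 0 ≤ t) : s ^ (p - 2) * (s ^ 2 - t ^ 2) ≤ 2 / p * (s ^ p - t ^ p) := by
  have bernoulli := rpow_one_add_le_one_add_mul_self
    (by nlinarith [sq_nonneg (t / s)] : -1 ≤ (t / s) ^ 2 - 1) (by positivity : 0 ≤ p / 2)
    (by linarith : p / 2 ≤ 1)
  have hts : (1 + ((t / s) ^ 2 - 1)) ^ (p / 2) = t ^ p / s ^ p := by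
    rw [add_sub_cancel, ← Real.rpow_natCast, ← Real.rpow_mul (by positivity),
      Real.div_rpow ht hs.le, Nat.cast_ofNat, mul_div_cancel₀ p two_ne_zero]
  have hsp : s ^ (p - 2) * s ^ 2 = s ^ p := by
    rw [← Real.rpow_natCast, ← Real.rpow_add hs]; norm_num
  have hts2 : (t / s) ^ 2 * s ^ p = t ^ 2 * s ^ (p - 2) := by
    rw [← hsp]; field_simp
  rw [hts, div_le_iff₀ (by positivity)] at bernoulli
  rw [div_mul_eq_mul_div, le_div_iff₀ hp0]
  nlinarith

namespace Matrix

variable {n 𝕜 : Type*} [RCLike 𝕜] [Fintype n] [DecidableEq n]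

theorem trace_diagonal_mul_mul_diagonal_mul_star (d e : n → 𝕜) (M : Matrix n n 𝕜) :
    (diagonal d * M * diagonal e * star M).trace =
      ∑ i, ∑ j, d i * e j * ((‖M i j‖ ^ 2 : ℝ) : 𝕜) := by
  rw [trace, mul_assoc, mul_assoc]
  refine Finset.sum_congr rfl fun i _ => ?_
  rw [diag_apply, diagonal_mul, mul_apply, Finset.mul_sum]
  refine Finset.sum_congr rfl fun j _ => ?_
  rw [diagonal_mul, star_apply, RCLike.ofReal_pow, ← RCLike.mul_conj, RCLike.star_def]
  ring

variable {A B : Matrix n n 𝕜}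

namespace IsHermitian

noncomputable def eigenOverlap (hA : A.IsHermitian) (hB : B.IsHermitian) (i j : n) : ℝ :=
  ‖(star (hA.eigenvectorUnitary : Matrix n n 𝕜) * hB.eigenvectorUnitary) i j‖ ^ 2

theorem eigenOverlap_nonneg (hA : A.IsHermitian) (hB : B.IsHermitian) (i j : n) :
    0 ≤ eigenOverlap hA hB i j := by
  unfold eigenOverlap; positivity

theorem cfc_mul_cfc (hA : A.IsHermitian) (f g : ℝ → ℝ) :
    hA.cfc f * hA.cfc g = hA.cfc fun t => f t * g t := by
  simp only [IsHermitian.cfc, ← map_mul, diagonal_mul_diagonal]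
  congr 2
  ext i
  simp

theorem re_trace_cfc_mul_cfc (hA : A.IsHermitian) (hB : B.IsHermitian) (f g : ℝ → ℝ) :
    RCLike.re (hA.cfc f * hB.cfc g).trace =
      ∑ i, ∑ j, f (hA.eigenvalues i) * g (hB.eigenvalues j) * eigenOverlap hA hB i j := by
  set U : Matrix n n 𝕜 := (hA.eigenvectorUnitary : Matrix n n 𝕜)
  set V : Matrix n n 𝕜 := (hB.eigenvectorUnitary : Matrix n n 𝕜)
  have hcycle : (U * diagonal (RCLike.ofReal ∘ f ∘ hA.eigenvalues) * star U *
      (V * diagonal (RCLike.ofReal ∘ g ∘ hB.eigenvalues) * star V)).trace =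
      (diagonal (RCLike.ofReal ∘ f ∘ hA.eigenvalues) * (star U * V) *
        diagonal (RCLike.ofReal ∘ g ∘ hB.eigenvalues) * star (star U * V)).trace := by
    rw [star_mul, star_star]
    simp only [mul_assoc]
    rw [trace_mul_comm]
    simp only [mul_assoc]
  simp only [IsHermitian.cfc, Unitary.conjStarAlgAut_apply]
  rw [hcycle, trace_diagonal_mul_mul_diagonal_mul_star, map_sum]
  refine Finset.sum_congr rfl fun i _ => ?_
  rw [map_sum]
  refine Finset.sum_congr rfl fun j _ => ?_
  simp only [Function.comp_apply, ← RCLike.ofReal_mul, RCLike.ofReal_re]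
  rfl

theorem re_trace_cfc_left (hA : A.IsHermitian) (hB : B.IsHermitian) (f : ℝ → ℝ) :
    RCLike.re (hA.cfc f).trace = ∑ i, ∑ j, f (hA.eigenvalues i) * eigenOverlap hA hB i j := by
  rw [← mul_one (hA.cfc f), ← cfc_const_one ℝ B hB.isSelfAdjoint, hB.cfc_eq,
    re_trace_cfc_mul_cfc]
  simp only [mul_one]

theorem re_trace_cfc_right (hA : A.IsHermitian) (hB : B.IsHermitian) (g : ℝ → ℝ) :
    RCLike.re (hB.cfc g).trace = ∑ i, ∑ j, g (hB.eigenvalues j) * eigenOverlap hA hB i j := by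
  rw [← one_mul (hB.cfc g), ← cfc_const_one ℝ A hA.isSelfAdjoint, hA.cfc_eq,
    re_trace_cfc_mul_cfc]
  simp only [one_mul]

theorem sq_eq_cfc (hA : A.IsHermitian) : A ^ 2 = hA.cfc (· ^ 2) := by
  rw [← hA.cfc_eq, cfc_pow_id A 2 hA.isSelfAdjoint]

end IsHermitian

end Matrix

theorem trace_pow_sub_le_general {n : ℕ} {p : ℝ} (hp0 : 0 < p) (hp2 : p < 2)
    {A B : Matrix (Fin n) (Fin n) ℂ} (hA : A.PosSemidef) (hB : B.PosSemidef)
    (hAinv : IsUnit A) :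
    ((hA.1.cfc fun t => t ^ (p - 2)) * (A ^ 2 - B ^ 2)).trace.re ≤
      (2 / p) * ((hA.1.cfc fun t => t ^ p) - (hB.1.cfc fun t => t ^ p)).trace.re := by
  set α := hA.1.eigenvalues
  set β := hB.1.eigenvalues
  set w := hA.1.eigenOverlap hB.1
  have hα : ∀ i, 0 < α i := (hA.posDef_iff_isUnit.mpr hAinv).eigenvalues_pos
  have hβ : ∀ j, 0 ≤ β j := hB.eigenvalues_nonneg
  calc ((hA.1.cfc fun t => t ^ (p - 2)) * (A ^ 2 - B ^ 2)).trace.re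
      = ∑ i, ∑ j, α i ^ (p - 2) * (α i ^ 2 - β j ^ 2) * w i j := by
        rw [hA.1.sq_eq_cfc, hB.1.sq_eq_cfc, mul_sub, trace_sub, Complex.sub_re,
          hA.1.cfc_mul_cfc, ← RCLike.re_to_complex, ← RCLike.re_to_complex,
          hA.1.re_trace_cfc_left hB.1, hA.1.re_trace_cfc_mul_cfc hB.1]
        simp only [← Finset.sum_sub_distrib]
        exact Finset.sum_congr rfl fun i _ => Finset.sum_congr rfl fun j _ => by ring
    _ ≤ ∑ i, ∑ j, 2 / p * (α i ^ p - β j ^ p) * w i j :=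
        Finset.sum_le_sum fun i _ => Finset.sum_le_sum fun j _ =>
          mul_le_mul_of_nonneg_right
            (Real.rpow_sub_two_mul_sq_sub_sq_le hp0 hp2.le (hα i) (hβ j))
            (hA.1.eigenOverlap_nonneg hB.1 i j)
    _ = (2 / p) * ((hA.1.cfc fun t => t ^ p) - (hB.1.cfc fun t => t ^ p)).trace.re := by
        rw [trace_sub, Complex.sub_re, ← RCLike.re_to_complex, ← RCLike.re_to_complex,
          hA.1.re_trace_cfc_left hB.1, hA.1.re_trace_cfc_right hB.1]
        simp only [← Finset.sum_sub_distrib, Finset.mul_sum]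
        exact Finset.sum_congr rfl fun i _ => Finset.sum_congr rfl fun j _ => by ring

/-- For `0 < p < 2` and positive semidefinite matrices `a, b` with `a` invertible
and `b² ≤ a²` (Loewner order), `tr(a^{p-2}(a² − b²)) ≤ (2/p)·tr(a^p − b^p)`,
where real powers are defined via the functional calculus. -/
theorem trace_pow_sub_le {n : ℕ} {p : ℝ} (hp0 : 0 < p) (hp2 : p < 2)
    {A B : Matrix (Fin n) (Fin n) ℂ} (hA : A.PosSemidef) (hB : B.PosSemidef)
    (hAinv : IsUnit A) (hBA : (A ^ 2 - B ^ 2).PosSemidef) :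
    ((hA.1.cfc fun t => t ^ (p - 2)) * (A ^ 2 - B ^ 2)).trace.re ≤
      (2 / p) * ((hA.1.cfc fun t => t ^ p) - (hB.1.cfc fun t => t ^ p)).trace.re :=
  trace_pow_sub_le_general hp0 hp2 hA hB hAinv
end

section
/- Let 0 < p < 2 and let 0 ≤ t ≤ u be real numbers with u > 0. Then u^{p−2}(u² − t²) ≤ (2/p)(u^p − t^p). -/
/-!
Weighted AM–GM with weights `p/2` and `1 - p/2` applied to `t²` and `u²` gives
`t^p u^{2-p} ≤ (p/2) t² + (1 - p/2) u²`; multiplying by `u^{p-2}` and rearranging is the claim.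
-/

open Real

theorem mul_rpow_sub_two_mul_sq_sub_le {p t u : ℝ} (hp0 : 0 ≤ p) (hp2 : p ≤ 2)
    (ht : 0 ≤ t) (hu : 0 < u) :
    p * (u ^ (p - 2) * (u ^ 2 - t ^ 2)) ≤ 2 * (u ^ p - t ^ p) := by
  have amgm : (t ^ 2) ^ (p / 2) * (u ^ 2) ^ (1 - p / 2) ≤ p / 2 * t ^ 2 + (1 - p / 2) * u ^ 2 :=
    geom_mean_le_arith_mean2_weighted (by positivity) (by linarith) (by positivity)
      (by positivity) (by ring)
  rw [← rpow_natCast_mul ht, ← rpow_natCast_mul hu.le, Nat.cast_ofNat,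
    mul_div_cancel₀ p two_ne_zero, mul_one_sub, mul_div_cancel₀ p two_ne_zero] at amgm
  have hu2 : u ^ (p - 2) * u ^ 2 = u ^ p := by
    rw [← rpow_natCast, ← rpow_add hu, Nat.cast_ofNat, sub_add_cancel]
  have hcancel : u ^ (p - 2) * u ^ (2 - p) = 1 := by
    rw [← rpow_add hu, sub_add_sub_cancel', sub_self, rpow_zero]
  have key : t ^ p ≤ u ^ (p - 2) * (p / 2 * t ^ 2 + (1 - p / 2) * u ^ 2) :=
    calc t ^ p = u ^ (p - 2) * (t ^ p * u ^ (2 - p)) := by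
          rw [mul_left_comm, hcancel, mul_one]
      _ ≤ _ := mul_le_mul_of_nonneg_left amgm (rpow_nonneg hu.le _)
  linear_combination 2 * key + 2 * hu2

theorem rpow_sub_two_mul_sq_sub_le_general {p t u : ℝ} (hp0 : 0 < p) (hp2 : p < 2)
    (ht : 0 ≤ t) (hu : 0 < u) :
    u ^ (p - 2) * (u ^ 2 - t ^ 2) ≤ (2 / p) * (u ^ p - t ^ p) := by
  rw [div_mul_eq_mul_div, le_div_iff₀ hp0, mul_comm]
  exact mul_rpow_sub_two_mul_sq_sub_le hp0.le hp2.le ht hu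

/-- For `0 < p < 2` and `0 ≤ t ≤ u` with `u > 0`:
`u^{p−2}(u² − t²) ≤ (2/p)(u^p − t^p)`. -/
theorem rpow_sub_two_mul_sq_sub_le {p t u : ℝ} (hp0 : 0 < p) (hp2 : p < 2)
    (ht : 0 ≤ t) (htu : t ≤ u) (hu : 0 < u) :
    u ^ (p - 2) * (u ^ 2 - t ^ 2) ≤ (2 / p) * (u ^ p - t ^ p) :=
  rpow_sub_two_mul_sq_sub_le_general hp0 hp2 ht hu
end

section
/- Let (q_k)_{k≥0} be a decreasing sequence of projections in a von Neumann algebra with normalized trace τ, with q_0 = e a projection, and suppose (f_k)_{k≥0} is an increasing sequence of positive operators with sup_k τ(f_k) = M < ∞ such that for each k: q_k commutes with q_{k−1} f_k q_{k−1}, and (q_{k−1} − q_k)f_k(q_{k−1} − q_k) ≥ λ²(q_{k−1} − q_k) whenever q_k ≠ q_{k−1} (Cuculescu property). Then with q = ⋀_k q_k, τ(e − q) ≤ M/λ². -/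
open scoped ComplexOrder Matrix

/-- The normalized trace `τ` on `n × n` complex matrices. -/
noncomputable def ntr {n : ℕ} (A : Matrix (Fin n) (Fin n) ℂ) : ℝ := A.trace.re / n

/-- A projection: a Hermitian idempotent matrix. -/
def IsProj {n : ℕ} (P : Matrix (Fin n) (Fin n) ℂ) : Prop :=
  P.IsHermitian ∧ P * P = P

/-!
With `p_k = q_k - q_{k+1}`, the Cuculescu inequality and the monotonicity of `f` give
`λ² τ(p_k) ≤ τ(p_k f_{k+1} p_k) ≤ τ(p_k f_N p_k) = τ(f_N p_k)` for `k < N`; summing the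
telescoping series, `λ² τ(e - q_N) ≤ τ(f_N (e - q_N)) ≤ τ(f_N) ≤ M`.
In finite dimensions the ranges of the decreasing projections `q_k` stabilise, so `q_k` is
eventually equal to some `q_K`, which lies below every `q_k` and hence below `Q`;
therefore `τ(e - Q) ≤ τ(e - q_K) ≤ M / λ²`.
-/

open Matrix LinearMap
-- `Matrix.Norms.L2Operator` supplies the C⋆-algebra structure behind the order lemmas on
-- `IsStarProjection`.
open scoped MatrixOrder Matrix.Norms.L2Operator

theorem Matrix.exists_eq_of_antitone_of_isStarProjection {m : Type*} [Fintype m] [DecidableEq m]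
    {q : ℕ → Matrix m m ℂ} (hq : ∀ k, IsStarProjection (q k)) (hanti : Antitone q) :
    ∃ K, ∀ N ≥ K, q N = q K := by
  let T k := toLinAlgEquiv' (q k)
  have hT k : IsIdempotentElem (T k) := (hq k).isIdempotentElem.map _
  have hrange {j k : ℕ} (h : j ≤ k) : range (T k) ≤ range (T j) := by
    rw [← (hT j).comp_eq_right_iff, ← Module.End.mul_eq_comp, ← map_mul,
      ((hq k).le_iff_mul_eq_right (hq j)).mp (hanti h)]
  obtain ⟨K, hK⟩ := IsArtinian.monotone_stabilizes
    ⟨fun k => OrderDual.toDual (range (T k)), fun _ _ h => hrange h⟩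
  refine ⟨K, fun N hN => ?_⟩
  have hKN : q N * q K = q K := toLinAlgEquiv'.injective <| by
    rw [map_mul, Module.End.mul_eq_comp, (hT N).comp_eq_right_iff]
    exact (congrArg OrderDual.ofDual (hK N hN)).le
  rw [← hKN, ((hq N).le_iff_mul_eq_left (hq K)).mp (hanti hN)]

section NormalizedTrace

variable {n : ℕ}

theorem ntr_sub (A B : Matrix (Fin n) (Fin n) ℂ) : ntr (A - B) = ntr A - ntr B := by
  simp only [ntr, trace_sub, Complex.sub_re, sub_div]

theorem ntr_smul (r : ℝ) (A : Matrix (Fin n) (Fin n) ℂ) : ntr (r • A) = r * ntr A := by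
  simp only [ntr, trace_smul, Complex.real_smul, Complex.re_ofReal_mul, mul_div_assoc]

theorem ntr_sum {ι : Type*} (s : Finset ι) (A : ι → Matrix (Fin n) (Fin n) ℂ) :
    ntr (∑ i ∈ s, A i) = ∑ i ∈ s, ntr (A i) := by
  simp only [ntr, trace_sum, Complex.re_sum, Finset.sum_div]

theorem ntr_mul_comm (A B : Matrix (Fin n) (Fin n) ℂ) : ntr (A * B) = ntr (B * A) := by
  rw [ntr, ntr, Matrix.trace_mul_comm]

theorem ntr_nonneg {A : Matrix (Fin n) (Fin n) ℂ} (hA : 0 ≤ A) : 0 ≤ ntr A :=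
  div_nonneg (Complex.nonneg_iff.mp hA.posSemidef.trace_nonneg).1 n.cast_nonneg

theorem ntr_mono : Monotone (ntr (n := n)) := fun A B h => by
  simpa [ntr_sub] using ntr_nonneg (sub_nonneg.mpr h)

theorem ntr_conj_of_isIdempotentElem {p : Matrix (Fin n) (Fin n) ℂ} (hp : IsIdempotentElem p)
    (F : Matrix (Fin n) (Fin n) ℂ) : ntr (p * F * p) = ntr (F * p) := by
  rw [mul_assoc, ntr_mul_comm, mul_assoc, hp.eq]

theorem ntr_mul_le_of_isStarProjection {F p : Matrix (Fin n) (Fin n) ℂ} (hF : 0 ≤ F)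
    (hp : IsStarProjection p) : ntr (F * p) ≤ ntr F := by
  have hcompl : 0 ≤ ntr (F * (1 - p)) := by
    rw [← ntr_conj_of_isIdempotentElem hp.one_sub.isIdempotentElem]
    exact ntr_nonneg (hp.one_sub.isSelfAdjoint.conjugate_nonneg hF)
  rw [mul_sub, mul_one, ntr_sub] at hcompl
  linarith

end NormalizedTrace

theorem mul_ntr_sub_le_ntr_of_cuculescu {n : ℕ} {c : ℝ} {q f : ℕ → Matrix (Fin n) (Fin n) ℂ}
    (hq : ∀ k, IsStarProjection (q k)) (hq_anti : Antitone q) (hf : ∀ k, 0 ≤ f k)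
    (hf_mono : Monotone f)
    (hcuc : ∀ k, q (k + 1) ≠ q k →
      c • (q k - q (k + 1)) ≤ (q k - q (k + 1)) * f (k + 1) * (q k - q (k + 1)))
    (N : ℕ) : c * ntr (q 0 - q N) ≤ ntr (f N) := by
  have hp (j k : ℕ) (h : j ≤ k) : IsStarProjection (q j - q k) :=
    ((hq k).le_iff_sub (hq j)).mp (hq_anti h)
  have step (k : ℕ) (hk : k < N) : c * ntr (q k - q (k + 1)) ≤ ntr (f N * (q k - q (k + 1))) := by
    set p := q k - q (k + 1)
    calc c * ntr p ≤ ntr (p * f (k + 1) * p) := by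
          by_cases h : q (k + 1) = q k
          · simp [p, h, ntr]
          · rw [← ntr_smul]; exact ntr_mono (hcuc k h)
      _ ≤ ntr (p * f N * p) :=
          ntr_mono (IsSelfAdjoint.conjugate_le_conjugate (hf_mono hk)
            (hp k (k + 1) k.le_succ).isSelfAdjoint)
      _ = ntr (f N * p) := ntr_conj_of_isIdempotentElem (hp k (k + 1) k.le_succ).isIdempotentElem _
  calc c * ntr (q 0 - q N) = ∑ k ∈ Finset.range N, c * ntr (q k - q (k + 1)) := by
        rw [← Finset.mul_sum, ← ntr_sum, Finset.sum_range_sub']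
    _ ≤ ∑ k ∈ Finset.range N, ntr (f N * (q k - q (k + 1))) :=
        Finset.sum_le_sum fun k hk => step k (Finset.mem_range.mp hk)
    _ = ntr (f N * (q 0 - q N)) := by rw [← ntr_sum, ← Finset.mul_sum, Finset.sum_range_sub']
    _ ≤ ntr (f N) := ntr_mul_le_of_isStarProjection (hf N) (hp 0 N N.zero_le)

theorem cuculescu_trace_estimate_general {n : ℕ} {l M : ℝ} (hl : 0 < l)
    (e : Matrix (Fin n) (Fin n) ℂ)
    (q : ℕ → Matrix (Fin n) (Fin n) ℂ) (hq : ∀ k, IsProj (q k))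
    (hq0 : q 0 = e) (hdec : ∀ k, (q k - q (k + 1)).PosSemidef)
    (f : ℕ → Matrix (Fin n) (Fin n) ℂ) (hfpos : ∀ k, (f k).PosSemidef)
    (hfmono : ∀ k, (f (k + 1) - f k).PosSemidef)
    (hbdd : BddAbove (Set.range fun k => ntr (f k)))
    (hM : (⨆ k, ntr (f k)) = M)
    (hcuc : ∀ k ≥ 1, q k ≠ q (k - 1) →
      ((q (k - 1) - q k) * f k * (q (k - 1) - q k) - l ^ 2 • (q (k - 1) - q k)).PosSemidef)
    (Q : Matrix (Fin n) (Fin n) ℂ)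
    (hQmax : ∀ R, IsProj R → (∀ k, (q k - R).PosSemidef) → (Q - R).PosSemidef) :
    ntr (e - Q) ≤ M / l ^ 2 := by
  have hproj k : IsStarProjection (q k) := ⟨(hq k).2, (hq k).1⟩
  have hq_anti : Antitone q := antitone_nat_of_succ_le hdec
  obtain ⟨K, hK⟩ := exists_eq_of_antitone_of_isStarProjection hproj hq_anti
  have hQK : q K ≤ Q := hQmax (q K) (hq K) fun k => by
    rcases le_total k K with h | h
    exacts [hq_anti h, (hK k h).ge]
  have hest := mul_ntr_sub_le_ntr_of_cuculescu hproj hq_anti (fun k => (hfpos k).nonneg)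
    (monotone_nat_of_le_succ hfmono) (fun k h => hcuc (k + 1) k.succ_pos h) K
  rw [le_div_iff₀ (by positivity), mul_comm, ← hM]
  calc l ^ 2 * ntr (e - Q) ≤ l ^ 2 * ntr (q 0 - q K) := by
        rw [hq0]
        gcongr
        exact ntr_mono (sub_le_sub_left hQK e)
    _ ≤ ⨆ k, ntr (f k) := hest.trans (le_ciSup hbdd K)

/-- Weak-type (1,1) trace estimate for Cuculescu projections: if `(q_k)` is a
decreasing sequence of projections with `q_0 = e`, `(f_k)` an increasing sequence
of positive operators with `sup_k τ(f_k) = M`, such that `q_k` commutes with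
`q_{k−1} f_k q_{k−1}` and `(q_{k−1} − q_k) f_k (q_{k−1} − q_k) ≥ λ²(q_{k−1} − q_k)`
whenever `q_k ≠ q_{k−1}`, then with `q = ⋀_k q_k` one has `τ(e − q) ≤ M/λ²`. -/
theorem cuculescu_trace_estimate {n : ℕ} (hn : 0 < n) {l M : ℝ} (hl : 0 < l)
    (e : Matrix (Fin n) (Fin n) ℂ) (he : IsProj e)
    (q : ℕ → Matrix (Fin n) (Fin n) ℂ) (hq : ∀ k, IsProj (q k))
    (hq0 : q 0 = e) (hdec : ∀ k, (q k - q (k + 1)).PosSemidef)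
    (f : ℕ → Matrix (Fin n) (Fin n) ℂ) (hfpos : ∀ k, (f k).PosSemidef)
    (hfmono : ∀ k, (f (k + 1) - f k).PosSemidef)
    (hbdd : BddAbove (Set.range fun k => ntr (f k)))
    (hM : (⨆ k, ntr (f k)) = M)
    (hcomm : ∀ k ≥ 1, Commute (q k) (q (k - 1) * f k * q (k - 1)))
    (hcuc : ∀ k ≥ 1, q k ≠ q (k - 1) →
      ((q (k - 1) - q k) * f k * (q (k - 1) - q k) - l ^ 2 • (q (k - 1) - q k)).PosSemidef)
    (Q : Matrix (Fin n) (Fin n) ℂ) (hQ : IsProj Q)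
    (hQle : ∀ k, (q k - Q).PosSemidef)
    (hQmax : ∀ R, IsProj R → (∀ k, (q k - R).PosSemidef) → (Q - R).PosSemidef) :
    ntr (e - Q) ≤ M / l ^ 2 :=
  cuculescu_trace_estimate_general hl e q hq hq0 hdec f hfpos hfmono hbdd hM hcuc Q hQmax
end

section
/- Let H be a Hilbert space and (π_k)_{k≥n} a decreasing sequence of projections with π_n = e. Let (f_k)_{k≥n} be an increasing sequence of positive operators with f_n = 0, each π_k commuting with π_{k−1} f_k π_{k−1}, and π_k f_k π_k ≤ λ² π_k for all k. Suppose additionally that the increments g_k = f_k − f_{k−1} satisfy ‖g_k‖_∞ ≤ λ². Then for every k ≥ n, ‖π_k f_k π_k + ∑_{j=n+1}^k (π_{j−1} − π_j) f_j (π_{j−1} − π_j)‖_∞ ≤ 3λ². -/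
open ContinuousLinearMap

/-! With `q_j = π_{j-1} - π_j`, the projections `q_j` sum to `π_n - π_k ≤ 1`. Whenever
`0 ≤ x_j` and `π_{j-1} x_j π_{j-1} ≤ c π_{j-1}`, one gets `0 ≤ q_j x_j q_j ≤ c q_j` because
`q_j ≤ π_{j-1}`, hence `0 ≤ ∑ q_j x_j q_j ≤ c`, and a positive element below `c` has norm at
most `c`. Splitting `f_j = (f_j - f_{j-1}) + f_{j-1}` produces two such sums with `c = λ²`: the
increments by their norm bound, the lagged terms by the Cuculescu bound at `j - 1`. The term
`π_k f_k π_k` contributes a third `λ²`. -/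

lemma Finset.sum_Icc_pred_sub {M : Type*} [AddCommGroup M] (f : ℕ → M) {n k : ℕ}
    (hnk : n ≤ k) : ∑ j ∈ Finset.Icc (n + 1) k, (f (j - 1) - f j) = f n - f k := by
  induction k, hnk using Nat.le_induction with
  | base => simp
  | succ k hk ih =>
    rw [Finset.sum_Icc_succ_top (by omega), ih, Nat.add_sub_cancel]
    abel

section CStarAlgebra

variable {A : Type*} [CStarAlgebra A] [PartialOrder A] [StarOrderedRing A]

lemma IsStarProjection.sub_mul_self_of_le {p r : A} (hp : IsStarProjection p)
    (hr : IsStarProjection r) (h : r ≤ p) : (p - r) * p = p - r := by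
  rw [sub_mul, hp.isIdempotentElem.eq, (hr.le_iff_mul_eq_left hp).mp h]

lemma IsStarProjection.conjugate_le_smul_of_compress_le {p q x : A} {c : ℝ}
    (hp : IsSelfAdjoint p) (hq : IsStarProjection q) (hqp : q * p = q)
    (hx : p * x * p ≤ c • p) : q * x * q ≤ c • q := by
  have hpq : p * q = q := by
    simpa [hp.star_eq, hq.isSelfAdjoint.star_eq] using congr(star $hqp)
  calc q * x * q = q * (p * x * p) * q := by
        simp only [← mul_assoc, hqp]
        rw [mul_assoc _ p q, hpq]
    _ ≤ q * (c • p) * q := hq.isSelfAdjoint.conjugate_le_conjugate hx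
    _ = c • q := by rw [mul_smul_comm, smul_mul_assoc, hqp, hq.isIdempotentElem.eq]

lemma IsStarProjection.conjugate_le_smul_of_norm_le {q x : A} {c : ℝ} (hq : IsStarProjection q)
    (hx : IsSelfAdjoint x) (hxc : ‖x‖ ≤ c) : q * x * q ≤ c • q := by
  refine hq.conjugate_le_smul_of_compress_le (.one A) (mul_one q) ?_
  rw [mul_one, one_mul, ← Algebra.algebraMap_eq_smul_one]
  exact hx.le_algebraMap_norm_self.trans (algebraMap_mono A hxc)

lemma norm_le_of_nonneg_of_le_smul {a b : A} {c : ℝ} (hc : 0 ≤ c) (ha : 0 ≤ a)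
    (hab : a ≤ c • b) (hb : b ≤ 1) : ‖a‖ ≤ c := by
  rw [CStarAlgebra.norm_le_iff_le_algebraMap _ hc ha, Algebra.algebraMap_eq_smul_one]
  exact hab.trans (smul_le_smul_of_nonneg_left hb hc)

lemma norm_sum_le_of_nonneg_of_le_smul {ι : Type*} {s : Finset ι} {t q : ι → A} {c : ℝ}
    (hc : 0 ≤ c) (ht : ∀ j ∈ s, 0 ≤ t j) (htq : ∀ j ∈ s, t j ≤ c • q j)
    (hq : ∑ j ∈ s, q j ≤ 1) : ‖∑ j ∈ s, t j‖ ≤ c := by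
  refine norm_le_of_nonneg_of_le_smul hc (Finset.sum_nonneg ht) ?_ hq
  rw [Finset.smul_sum]
  exact Finset.sum_le_sum htq

lemma norm_sum_conjugate_sub_pred_le {π : ℕ → A} {n : ℕ} (hπ : ∀ m ≥ n, IsStarProjection (π m))
    (hanti : ∀ m ≥ n, π (m + 1) ≤ π m) {x : ℕ → A} {c : ℝ} (hc : 0 ≤ c)
    (hx : ∀ j > n, 0 ≤ x j) (hxc : ∀ j > n, π (j - 1) * x j * π (j - 1) ≤ c • π (j - 1))
    {k : ℕ} (hk : n ≤ k) :
    ‖∑ j ∈ Finset.Icc (n + 1) k, (π (j - 1) - π j) * x j * (π (j - 1) - π j)‖ ≤ c := by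
  have hq (j : ℕ) (hj : n < j) :
      IsStarProjection (π (j - 1) - π j) ∧ (π (j - 1) - π j) * π (j - 1) = π (j - 1) - π j := by
    obtain ⟨m, rfl⟩ : ∃ m, j = m + 1 := ⟨j - 1, by omega⟩
    rw [Nat.add_sub_cancel]
    have hle := hanti m (by omega)
    have hp := hπ m (by omega)
    have hr := hπ (m + 1) (by omega)
    exact ⟨(hr.le_iff_sub hp).mp hle, hp.sub_mul_self_of_le hr hle⟩
  have hsum : ∑ j ∈ Finset.Icc (n + 1) k, (π (j - 1) - π j) ≤ 1 := by
    rw [Finset.sum_Icc_pred_sub π hk]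
    exact (sub_le_self _ (hπ k hk).nonneg).trans (hπ n le_rfl).le_one
  refine norm_sum_le_of_nonneg_of_le_smul hc (fun j hj ↦ ?_) (fun j hj ↦ ?_) hsum
  all_goals replace hj : n < j := (Finset.mem_Icc.mp hj).1
  · exact (hq j hj).1.isSelfAdjoint.conjugate_nonneg (hx j hj)
  · exact (hq j hj).1.conjugate_le_smul_of_compress_le (hπ (j - 1) (by omega)).isSelfAdjoint
      (hq j hj).2 (hxc j hj)

end CStarAlgebra

theorem truncated_square_function_norm_bound_general
    {H : Type*} [NormedAddCommGroup H] [InnerProductSpace ℂ H] [CompleteSpace H]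
    (n : ℕ) (l : ℝ)
    (π f : ℕ → H →L[ℂ] H)
    (hproj : ∀ k ≥ n, IsIdempotentElem (π k) ∧ IsSelfAdjoint (π k))
    (hdec : ∀ k ≥ n, (π k - π (k + 1)).IsPositive)
    (hfpos : ∀ k ≥ n, (f k).IsPositive)
    (hfmono : ∀ k ≥ n, (f (k + 1) - f k).IsPositive)
    (hcuc : ∀ k ≥ n, (l ^ 2 • π k - π k * f k * π k).IsPositive)
    (hinc : ∀ k > n, ‖f k - f (k - 1)‖ ≤ l ^ 2) :
    ∀ k ≥ n,
      ‖π k * f k * π k +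
          ∑ j ∈ Finset.Icc (n + 1) k, (π (j - 1) - π j) * f j * (π (j - 1) - π j)‖ ≤
        3 * l ^ 2 := by
  intro k hk
  have hπ (m : ℕ) (hm : m ≥ n) : IsStarProjection (π m) := ⟨(hproj m hm).1, (hproj m hm).2⟩
  have hanti (m : ℕ) (hm : m ≥ n) : π (m + 1) ≤ π m := (le_def _ _).mpr (hdec m hm)
  have hf (m : ℕ) (hm : m ≥ n) : 0 ≤ f m := (nonneg_iff_isPositive _).mpr (hfpos m hm)
  have hcomp (m : ℕ) (hm : m ≥ n) : π m * f m * π m ≤ l ^ 2 • π m := (le_def _ _).mpr (hcuc m hm)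
  have hg (j : ℕ) (hj : j > n) : 0 ≤ f j - f (j - 1) := by
    rw [nonneg_iff_isPositive, ← Nat.sub_add_cancel (by omega : 1 ≤ j)]
    simpa using hfmono (j - 1) (by omega)
  have hfirst : ‖π k * f k * π k‖ ≤ l ^ 2 := norm_le_of_nonneg_of_le_smul (sq_nonneg l)
    ((hπ k hk).isSelfAdjoint.conjugate_nonneg (hf k hk)) (hcomp k hk) (hπ k hk).le_one
  have hincrements := norm_sum_conjugate_sub_pred_le hπ hanti (sq_nonneg l) hg
    (fun j hj ↦ (hπ (j - 1) (by omega)).conjugate_le_smul_of_norm_le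
      (.of_nonneg (hg j hj)) (hinc j hj)) hk
  have hlagged := norm_sum_conjugate_sub_pred_le hπ hanti (sq_nonneg l)
    (fun j hj ↦ hf (j - 1) (by omega)) (fun j hj ↦ hcomp (j - 1) (by omega)) hk
  have hsplit (j : ℕ) : (π (j - 1) - π j) * f j * (π (j - 1) - π j) =
      (π (j - 1) - π j) * (f j - f (j - 1)) * (π (j - 1) - π j) +
        (π (j - 1) - π j) * f (j - 1) * (π (j - 1) - π j) := by
    noncomm_ring
  simp only [hsplit, Finset.sum_add_distrib]
  calc _ ≤ _ := (norm_add_le _ _).trans (add_le_add le_rfl (norm_add_le _ _))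
    _ ≤ 3 * l ^ 2 := by linarith

/-- Norm bound from Step 1 of the `(p,∞)_c`-atom decomposition, abstracted to a
Hilbert space: if `(π_k)_{k≥n}` are decreasing projections with `π_n = e`,
`(f_k)_{k≥n}` increasing positive operators with `f_n = 0`, each `π_k` commuting
with `π_{k−1} f_k π_{k−1}` and `π_k f_k π_k ≤ λ² π_k`, and the increments
`g_k = f_k − f_{k−1}` satisfy `‖g_k‖ ≤ λ²`, then for every `k ≥ n`,
`‖π_k f_k π_k + ∑_{j=n+1}^k (π_{j−1} − π_j) f_j (π_{j−1} − π_j)‖ ≤ 3λ²`. -/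
theorem truncated_square_function_norm_bound
    {H : Type*} [NormedAddCommGroup H] [InnerProductSpace ℂ H] [CompleteSpace H]
    (n : ℕ) (l : ℝ) (e : H →L[ℂ] H)
    (π f : ℕ → H →L[ℂ] H)
    (hproj : ∀ k ≥ n, IsIdempotentElem (π k) ∧ IsSelfAdjoint (π k))
    (hπn : π n = e)
    (hdec : ∀ k ≥ n, (π k - π (k + 1)).IsPositive)
    (hfn : f n = 0)
    (hfpos : ∀ k ≥ n, (f k).IsPositive)
    (hfmono : ∀ k ≥ n, (f (k + 1) - f k).IsPositive)
    (hcomm : ∀ k > n, Commute (π k) (π (k - 1) * f k * π (k - 1)))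
    (hcuc : ∀ k ≥ n, (l ^ 2 • π k - π k * f k * π k).IsPositive)
    (hinc : ∀ k > n, ‖f k - f (k - 1)‖ ≤ l ^ 2) :
    ∀ k ≥ n,
      ‖π k * f k * π k +
          ∑ j ∈ Finset.Icc (n + 1) k, (π (j - 1) - π j) * f j * (π (j - 1) - π j)‖ ≤
        3 * l ^ 2 :=
  truncated_square_function_norm_bound_general n l π f hproj hdec hfpos hfmono hcuc hinc
end
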